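/- For any θ, x ∈ ℝ^d, y ∈ ℝ and ε ≥ 0, the supremum of ((x+z)ᵀθ − y)² over z ∈ ℝ^d with ‖z‖₂ ≤ ε equals (|xᵀθ − y| + ε‖θ‖₂)². Moreover, if θ ≠ 0 and xᵀθ ≠ y, this supremum is attained at z* = ε·sgn(xᵀθ − y)·θ/‖θ‖₂. -/

import Mathlib

open scoped RealInnerProductSpace

/-!
By Cauchy–Schwarz, `|⟪θ, x + z⟫ - y| ≤ |⟪θ, x⟫ - y| + ‖θ‖ ‖z‖`, which bounds the loss on the ball.
Moving by `ε` along `±θ / ‖θ‖`, with the sign of the residual `⟪θ, x⟫ - y`, makes this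
bound tight. When the residual vanishes either sign works, which is why attainment
holds in general although the formula with `Real.sign` needs a nonzero residual.
-/

namespace Real

theorem sign_mul_self_eq_abs (r : ℝ) : sign r * r = |r| := by
  rcases lt_trichotomy r 0 with hr | rfl | hr
  · rw [sign_of_neg hr, abs_of_neg hr, neg_one_mul]
  · simp
  · rw [sign_of_pos hr, abs_of_pos hr, one_mul]

theorem abs_sign_of_ne_zero {r : ℝ} (hr : r ≠ 0) : |sign r| = 1 := by
  rcases sign_apply_eq_of_ne_zero r hr with h | h <;> simp [h]

theorem exists_abs_eq_one_mul_self_eq_abs (r : ℝ) : ∃ s : ℝ, |s| = 1 ∧ s * r = |r| := by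
  rcases le_or_gt 0 r with hr | hr
  · exact ⟨1, abs_one, by rw [one_mul, abs_of_nonneg hr]⟩
  · exact ⟨-1, by simp, by rw [neg_one_mul, abs_of_neg hr]⟩

end Real

section InnerProductSpace

variable {E : Type*} [NormedAddCommGroup E] [InnerProductSpace ℝ E]

theorem sq_add_inner_le {θ z : E} {ε : ℝ} (c : ℝ) (hz : ‖z‖ ≤ ε) :
    (c + ⟪θ, z⟫) ^ 2 ≤ (|c| + ε * ‖θ‖) ^ 2 := by
  have hinner : |⟪θ, z⟫| ≤ ε * ‖θ‖ :=
    calc |⟪θ, z⟫| ≤ ‖θ‖ * ‖z‖ := abs_real_inner_le_norm θ z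
      _ ≤ ‖θ‖ * ε := mul_le_mul_of_nonneg_left hz (norm_nonneg θ)
      _ = ε * ‖θ‖ := mul_comm _ _
  rw [← sq_abs (c + _)]
  exact pow_le_pow_left₀ (abs_nonneg _) ((abs_add_le _ _).trans (by linarith)) 2

theorem norm_smul_div_norm_self_le (a : ℝ) (θ : E) : ‖(a / ‖θ‖) • θ‖ ≤ |a| := by
  rw [norm_smul, norm_div, norm_norm, Real.norm_eq_abs]
  rcases eq_or_ne ‖θ‖ 0 with h | h
  · simp [h]
  · rw [div_mul_cancel₀ _ h]

theorem inner_smul_div_norm_self (a : ℝ) (θ : E) : ⟪θ, (a / ‖θ‖) • θ⟫ = a * ‖θ‖ := by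
  rw [real_inner_smul_right, real_inner_self_eq_norm_sq]
  rcases eq_or_ne ‖θ‖ 0 with h | h
  · simp [h]
  · field_simp

theorem sq_add_inner_smul_div_norm_self {c ε s : ℝ} (θ : E) (hs : |s| = 1) (hsc : s * c = |c|) :
    (c + ⟪θ, (ε * s / ‖θ‖) • θ⟫) ^ 2 = (|c| + ε * ‖θ‖) ^ 2 := by
  have hs2 : s ^ 2 = 1 := by rw [← sq_abs, hs, one_pow]
  rw [inner_smul_div_norm_self]
  linear_combination (2 * ε * ‖θ‖) * hsc + (ε * ‖θ‖) ^ 2 * hs2 - sq_abs c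

end InnerProductSpace

theorem l2_attack_closed_form
    {d : ℕ} (θ x : EuclideanSpace ℝ (Fin d)) (y ε : ℝ) (hε : 0 ≤ ε) :
    IsGreatest ((fun z => (⟪θ, x + z⟫ - y) ^ 2) '' Metric.closedBall 0 ε)
      ((|⟪θ, x⟫ - y| + ε * ‖θ‖) ^ 2) ∧
    (θ ≠ 0 → ⟪θ, x⟫ ≠ y →
      (ε * Real.sign (⟪θ, x⟫ - y) / ‖θ‖) • θ ∈
          Metric.closedBall (0 : EuclideanSpace ℝ (Fin d)) ε ∧
      (⟪θ, x + (ε * Real.sign (⟪θ, x⟫ - y) / ‖θ‖) • θ⟫ - y) ^ 2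
        = (|⟪θ, x⟫ - y| + ε * ‖θ‖) ^ 2) := by
  have hresidual : ∀ z, ⟪θ, x + z⟫ - y = (⟪θ, x⟫ - y) + ⟪θ, z⟫ := fun z => by
    rw [inner_add_right]; ring
  have hball : ∀ {s : ℝ}, |s| = 1 → (ε * s / ‖θ‖) • θ ∈ Metric.closedBall 0 ε := fun hs => by
    rw [mem_closedBall_zero_iff]
    refine (norm_smul_div_norm_self_le _ θ).trans ?_
    rw [abs_mul, hs, mul_one, abs_of_nonneg hε]
  refine ⟨⟨?_, ?_⟩, fun _ hne => ?_⟩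
  · obtain ⟨s, hs, hsc⟩ := Real.exists_abs_eq_one_mul_self_eq_abs (⟪θ, x⟫ - y)
    exact ⟨_, hball hs, by simp only [hresidual, sq_add_inner_smul_div_norm_self θ hs hsc]⟩
  · rintro _ ⟨z, hz, rfl⟩
    simpa only [hresidual] using
      sq_add_inner_le (θ := θ) (⟪θ, x⟫ - y) (mem_closedBall_zero_iff.mp hz)
  · have hs := Real.abs_sign_of_ne_zero (sub_ne_zero.mpr hne)
    exact ⟨hball hs, by
      rw [hresidual, sq_add_inner_smul_div_norm_self θ hs (Real.sign_mul_self_eq_abs _)]⟩
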